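/- arXiv:2411.19337 — 6 statements merged into one kernel-verified Lean document; each statement's English description precedes it below -/
import Mathlib

section
/- Let α ∈ (0,1] and let f : [0,∞) → ℝ be measurable and bounded. If ∫_0^t f(x)(t − x)^{α-1} dx = 0 for every t ≥ 0, then f(x) = 0 for Lebesgue-almost every x ≥ 0. -/
/-!
Apply the integral of order `1 - α` to `I^α f = 0`. By Fubini and the substitution
`s = x + (t - x) u`, composing the kernels `(s - x)^(α-1)` and `(t - s)^(β-1)` gives
`B(α, β) (t - x)^(α+β-1)`, so for `β = 1 - α` one gets `B(α, 1 - α) ∫_0^t f = 0` for every `t`.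
As the Beta integral is positive, every primitive `∫_0^t f` vanishes, and by Lebesgue's
differentiation theorem `f = 0` almost everywhere on `[0, ∞)`.
-/

open MeasureTheory Set Filter Topology intervalIntegral

noncomputable def Real.betaIntegral (α β : ℝ) : ℝ :=
  ∫ u in (0 : ℝ)..1, u ^ (α - 1) * (1 - u) ^ (β - 1)

theorem intervalIntegrable_sub_rpow_mul_sub_rpow {α β a b : ℝ} (hα : 0 < α) (hβ : 0 < β)
    (hab : a ≤ b) :
    IntervalIntegrable (fun s => (s - a) ^ (α - 1) * (b - s) ^ (β - 1)) volume a b := by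
  rcases hab.eq_or_lt with rfl | hab
  · exact .refl
  obtain ⟨m, ham, hmb⟩ := exists_between hab
  have hleft : IntervalIntegrable (fun s => (s - a) ^ (α - 1)) volume a m := by
    simpa using (intervalIntegrable_rpow' (r := α - 1) (by linarith) (a := 0) (b := m - a))
      |>.comp_sub_right a
  have hright : IntervalIntegrable (fun s => (b - s) ^ (β - 1)) volume m b := by
    simpa using ((intervalIntegrable_rpow' (r := β - 1) (by linarith) (a := 0) (b := b - m))
      |>.comp_sub_left b).symm
  refine (hleft.mul_continuousOn ?_).trans (hright.continuousOn_mul ?_)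
  · refine ContinuousOn.rpow_const (by fun_prop) fun s hs => Or.inl ?_
    rw [uIcc_of_le ham.le] at hs
    linarith [hs.2]
  · refine ContinuousOn.rpow_const (by fun_prop) fun s hs => Or.inl ?_
    rw [uIcc_of_le hmb.le] at hs
    linarith [hs.1]

theorem Real.betaIntegral_pos {α β : ℝ} (hα : 0 < α) (hβ : 0 < β) :
    0 < Real.betaIntegral α β := by
  refine intervalIntegral_pos_of_pos_on ?_ (fun u hu => ?_) zero_lt_one
  · simpa using intervalIntegrable_sub_rpow_mul_sub_rpow hα hβ zero_le_one
  · exact mul_pos (Real.rpow_pos_of_pos hu.1 _) (Real.rpow_pos_of_pos (by linarith [hu.2]) _)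

theorem integral_sub_rpow_mul_sub_rpow {α β a b : ℝ} (hab : a < b) :
    ∫ s in a..b, (s - a) ^ (α - 1) * (b - s) ^ (β - 1)
      = Real.betaIntegral α β * (b - a) ^ (α + β - 1) := by
  have hc : 0 < b - a := sub_pos.2 hab
  have hscale : ∀ u ∈ uIcc (0 : ℝ) 1,
      (a + (b - a) * u - a) ^ (α - 1) * (b - (a + (b - a) * u)) ^ (β - 1)
        = (b - a) ^ (α + β - 2) * (u ^ (α - 1) * (1 - u) ^ (β - 1)) := by
    intro u hu
    rw [uIcc_of_le zero_le_one] at hu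
    rw [show a + (b - a) * u - a = (b - a) * u by ring,
      show b - (a + (b - a) * u) = (b - a) * (1 - u) by ring,
      Real.mul_rpow hc.le hu.1, Real.mul_rpow hc.le (by linarith [hu.2]),
      show α + β - 2 = (α - 1) + (β - 1) by ring, Real.rpow_add hc]
    ring
  calc ∫ s in a..b, (s - a) ^ (α - 1) * (b - s) ^ (β - 1)
      = (b - a) * ∫ u in (0 : ℝ)..1,
          (a + (b - a) * u - a) ^ (α - 1) * (b - (a + (b - a) * u)) ^ (β - 1) := by
        simpa using (smul_integral_comp_add_mul
          (fun s => (s - a) ^ (α - 1) * (b - s) ^ (β - 1)) (b - a) a (a := 0) (b := 1)).symm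
    _ = (b - a) * ((b - a) ^ (α + β - 2) * Real.betaIntegral α β) := by
        rw [integral_congr hscale, intervalIntegral.integral_const_mul, Real.betaIntegral]
    _ = Real.betaIntegral α β * (b - a) ^ (α + β - 1) := by
        rw [show α + β - 1 = (α + β - 2) + 1 by ring, Real.rpow_add_one hc.ne']
        ring

/-- The Riemann–Liouville integral of order `α`, without the normalising factor `1 / Γ(α)`. -/
noncomputable def riemannLiouville (α : ℝ) (f : ℝ → ℝ) (t : ℝ) : ℝ :=
  ∫ x in (0 : ℝ)..t, f x * (t - x) ^ (α - 1)

theorem integral_rpow_mul_riemannLiouville {α β t : ℝ} (hα : 0 < α) (hβ : 0 < β) (ht : 0 ≤ t)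
    {f : ℝ → ℝ} (hf : Measurable f)
    (hft : IntegrableOn (fun x => f x * (t - x) ^ (α + β - 1)) (Ioc 0 t)) :
    ∫ s in (0 : ℝ)..t, (t - s) ^ (β - 1) * riemannLiouville α f s
      = Real.betaIntegral α β * riemannLiouville (α + β) f t := by
  set μ := volume.restrict (Ioc (0 : ℝ) t)
  set k : ℝ → ℝ → ℝ := fun x s => (s - x) ^ (α - 1) * (t - s) ^ (β - 1)
  set K : ℝ → ℝ → ℝ := fun s x => if x ≤ s then f x * k x s else 0
  have hK_fst (s : ℝ) : K s = fun x =>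
      (t - s) ^ (β - 1) * {x | x ≤ s}.indicator (fun x => f x * (s - x) ^ (α - 1)) x := by
    ext x
    by_cases hxs : x ≤ s <;> simp [K, k, hxs]
    ring
  have hK_snd (x : ℝ) : (fun s => K s x) = fun s => f x * (Ici x).indicator (k x) s := by
    ext s
    by_cases hxs : x ≤ s <;> simp [K, hxs]
  have hIoo : ∀ᵐ x ∂μ, x ∈ Ioo 0 t :=
    ae_restrict_of_ae_eq_of_ae_restrict Ioo_ae_eq_Ioc (ae_restrict_mem measurableSet_Ioo)
  have hIcc {x : ℝ} (hx : x ∈ Ioo 0 t) : Ici x ∩ Ioc 0 t = Icc x t := by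
    ext s
    simp only [mem_inter_iff, mem_Ici, mem_Ioc, mem_Icc]
    constructor
    · rintro ⟨hxs, -, hst⟩
      exact ⟨hxs, hst⟩
    · rintro ⟨hxs, hst⟩
      exact ⟨hxs, hx.1.trans_le hxs, hst⟩
  have hk_integrable {x : ℝ} (hx : x ∈ Ioo 0 t) : Integrable ((Ici x).indicator (k x)) μ := by
    rw [integrable_indicator_iff measurableSet_Ici, IntegrableOn,
      Measure.restrict_restrict measurableSet_Ici, hIcc hx, ← IntegrableOn,
      integrableOn_Icc_iff_integrableOn_Ioc,
      ← intervalIntegrable_iff_integrableOn_Ioc_of_le hx.2.le]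
    exact intervalIntegrable_sub_rpow_mul_sub_rpow hα hβ hx.2.le
  have hk_integral {x : ℝ} (hx : x ∈ Ioo 0 t) :
      ∫ s, (Ici x).indicator (k x) s ∂μ = Real.betaIntegral α β * (t - x) ^ (α + β - 1) := by
    rw [MeasureTheory.integral_indicator measurableSet_Ici,
      Measure.restrict_restrict measurableSet_Ici, hIcc hx, integral_Icc_eq_integral_Ioc,
      ← integral_of_le hx.2.le]
    exact integral_sub_rpow_mul_sub_rpow hx.2
  have hK_meas : Measurable (Function.uncurry K) :=
    Measurable.ite (measurableSet_le measurable_snd measurable_fst) (by fun_prop) measurable_const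
  have hK_int : Integrable (Function.uncurry K) (μ.prod μ) := by
    refine (integrable_prod_iff' hK_meas.aestronglyMeasurable).2 ⟨?_, ?_⟩
    · filter_upwards [hIoo] with x hx
      simpa only [Function.uncurry_apply_pair, hK_snd] using (hk_integrable hx).const_mul (f x)
    · refine (hft.norm.mul_const (Real.betaIntegral α β)).congr ?_
      filter_upwards [hIoo] with x hx
      have hnorm : ∫ s, ‖K s x‖ ∂μ = |f x| * ∫ s, (Ici x).indicator (k x) s ∂μ := by
        rw [← MeasureTheory.integral_const_mul]
        refine setIntegral_congr_fun measurableSet_Ioc fun s hs => ?_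
        have hk_nonneg : 0 ≤ (Ici x).indicator (k x) s := indicator_apply_nonneg fun hxs =>
          mul_nonneg (Real.rpow_nonneg (sub_nonneg.2 hxs) _)
            (Real.rpow_nonneg (sub_nonneg.2 hs.2) _)
        rw [congrFun (hK_snd x) s, norm_mul, Real.norm_eq_abs, Real.norm_eq_abs,
          abs_of_nonneg hk_nonneg]
      rw [Function.uncurry_def, hnorm, hk_integral hx, norm_mul, Real.norm_eq_abs,
        Real.norm_eq_abs, abs_of_nonneg (Real.rpow_nonneg (sub_nonneg.2 hx.2.le) _)]
      ring
  calc ∫ s in (0 : ℝ)..t, (t - s) ^ (β - 1) * riemannLiouville α f s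
      = ∫ s, ∫ x, K s x ∂μ ∂μ := by
        rw [integral_of_le ht]
        refine setIntegral_congr_fun measurableSet_Ioc fun s hs => ?_
        rw [hK_fst, MeasureTheory.integral_const_mul, ← integral_of_le ht,
          intervalIntegral.integral_indicator ⟨hs.1.le, hs.2⟩, riemannLiouville]
    _ = ∫ x, ∫ s, K s x ∂μ ∂μ := integral_integral_swap hK_int
    _ = ∫ x, Real.betaIntegral α β * (f x * (t - x) ^ (α + β - 1)) ∂μ := by
        refine integral_congr_ae ?_
        filter_upwards [hIoo] with x hx
        rw [hK_snd, MeasureTheory.integral_const_mul, hk_integral hx]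
        ring
    _ = Real.betaIntegral α β * riemannLiouville (α + β) f t := by
        rw [MeasureTheory.integral_const_mul, riemannLiouville, integral_of_le ht]

theorem intervalIntegral_eq_zero_of_riemannLiouville_eq_zero {α t : ℝ}
    (hα : α ∈ Ioc (0 : ℝ) 1) {f : ℝ → ℝ} (hf : Measurable f) (hft : IntegrableOn f (Ioc 0 t))
    (h : ∀ s, 0 ≤ s → riemannLiouville α f s = 0) (ht : 0 ≤ t) :
    ∫ x in (0 : ℝ)..t, f x = 0 := by
  have hrl_one : riemannLiouville 1 f t = ∫ x in (0 : ℝ)..t, f x := by simp [riemannLiouville]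
  rcases hα.2.eq_or_lt with rfl | hα_lt
  · rw [← hrl_one, h t ht]
  have hβ : 0 < 1 - α := sub_pos.2 hα_lt
  have hcomp := integral_rpow_mul_riemannLiouville hα.1 hβ ht hf (by simpa using hft)
  have hlhs : ∫ s in (0 : ℝ)..t, (t - s) ^ (1 - α - 1) * riemannLiouville α f s = 0 := by
    refine (integral_congr fun s hs => ?_).trans intervalIntegral.integral_zero
    rw [h s (uIcc_of_le ht ▸ hs).1, mul_zero]
  rw [add_sub_cancel, hrl_one, hlhs] at hcomp
  exact (mul_eq_zero.1 hcomp.symm).resolve_left (Real.betaIntegral_pos hα.1 hβ).ne'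

theorem ae_eq_zero_of_forall_intervalIntegral_eq_zero {E : Type*} [NormedAddCommGroup E]
    [NormedSpace ℝ E] [CompleteSpace E] {f : ℝ → E} (hf : LocallyIntegrable f volume) {a : ℝ}
    (h : ∀ t, a ≤ t → ∫ x in a..t, f x = 0) :
    ∀ᵐ x ∂volume.restrict (Ioi a), f x = 0 := by
  rw [ae_restrict_iff' measurableSet_Ioi]
  filter_upwards [LocallyIntegrable.ae_hasDerivAt_integral hf] with x hx hax
  have hzero : (fun t => ∫ y in a..t, f y) =ᶠ[𝓝 x] fun _ => 0 :=
    eventually_of_mem (Ioi_mem_nhds hax) fun t ht => h t (le_of_lt ht)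
  exact (hx a).unique ((hasDerivAt_const x 0).congr_of_eventuallyEq hzero)

theorem stmt2 (α : ℝ) (hα : α ∈ Ioc (0 : ℝ) 1)
    (f : ℝ → ℝ) (hf : Measurable f)
    (C : ℝ) (hbd : ∀ x, 0 ≤ x → |f x| ≤ C)
    (h : ∀ t, 0 ≤ t → ∫ x in (0 : ℝ)..t, f x * (t - x) ^ (α - 1) = 0) :
    ∀ᵐ x ∂(volume.restrict (Ici (0 : ℝ))), f x = 0 := by
  set g := (Ioi (0 : ℝ)).indicator f
  have hg_meas : Measurable g := hf.indicator measurableSet_Ioi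
  have hg_bdd (x : ℝ) : ‖g x‖ ≤ ‖C‖ := by
    by_cases hx : 0 < x
    · simpa [g, hx] using (hbd x hx.le).trans (le_abs_self C)
    · simp [g, hx]
  have hg_loc : LocallyIntegrable g volume :=
    (locallyIntegrable_const C).mono hg_meas.aestronglyMeasurable (ae_of_all _ hg_bdd)
  have hg_rl (t : ℝ) (ht : 0 ≤ t) : riemannLiouville α g t = 0 := by
    rw [← h t ht, riemannLiouville]
    refine integral_congr_ae (ae_of_all _ fun x hx => ?_)
    rw [uIoc_of_le ht] at hx
    simp [g, hx.1]
  have hg_int (t : ℝ) (ht : 0 ≤ t) : ∫ x in (0 : ℝ)..t, g x = 0 :=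
    intervalIntegral_eq_zero_of_riemannLiouville_eq_zero hα hg_meas
      ((hg_loc.integrableOn_isCompact isCompact_Icc).mono_set Ioc_subset_Icc_self) hg_rl ht
  rw [Measure.restrict_congr_set Ioi_ae_eq_Ici.symm]
  filter_upwards [ae_eq_zero_of_forall_intervalIntegral_eq_zero hg_loc hg_int,
    ae_restrict_mem measurableSet_Ioi] with x hgx hx
  simpa [g, hx] using hgx
end

section
/- Let α ∈ (0,1] and let h : [0,∞) → ℝ be measurable and bounded. If h(t) = −(Γ(1+α)/Γ(α)) ∫_0^t h(x)(t − x)^{α-1} dx for every t ≥ 0, then h(t) = 0 for every t ≥ 0. -/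
/-!
If `h` vanishes on `[0, S]`, the equation `h = c ∫₀ᵗ h(x) (t - x)^(α-1) dx` only sees `h` on
`[S, t]`, so a bound `|h| ≤ B` on `[S, S + δ]` improves to `|h| ≤ q B` there, with
`q = |c| δ^α / α`. For `δ` small `q < 1`; iterating from the global bound forces `h = 0` on
`[S, S + δ]`, and marching forward in steps of `δ` covers `[0, ∞)`.
-/

open MeasureTheory Set Filter

variable {α : ℝ}

lemma intervalIntegrable_sub_rpow_sub_one (hα : 0 < α) (t a b : ℝ) :
    IntervalIntegrable (fun x : ℝ => (t - x) ^ (α - 1)) volume a b := by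
  simpa using (intervalIntegral.intervalIntegrable_rpow' (by linarith : (-1 : ℝ) < α - 1)
    (a := t - a) (b := t - b)).comp_sub_left t

lemma integral_sub_rpow_sub_one (hα : 0 < α) (s t : ℝ) :
    ∫ x in s..t, (t - x) ^ (α - 1) = (t - s) ^ α / α := by
  rw [intervalIntegral.integral_comp_sub_left (fun u : ℝ => u ^ (α - 1)) t, sub_self,
    integral_rpow (Or.inl (by linarith)), sub_add_cancel, Real.zero_rpow hα.ne', sub_zero]

lemma abs_integral_mul_sub_rpow_le (hα : 0 < α) {f : ℝ → ℝ} {s t B : ℝ} (hst : s ≤ t)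
    (hf : ∀ x ∈ Ioc s t, |f x| ≤ B) :
    |∫ x in s..t, f x * (t - x) ^ (α - 1)| ≤ B * ((t - s) ^ α / α) := by
  rw [← Real.norm_eq_abs, ← integral_sub_rpow_sub_one hα s t,
    ← intervalIntegral.integral_const_mul B]
  refine intervalIntegral.norm_integral_le_of_norm_le hst (ae_of_all _ fun x hx => ?_)
    ((intervalIntegrable_sub_rpow_sub_one hα t s t).const_mul B)
  have hpow : 0 ≤ (t - x) ^ (α - 1) := Real.rpow_nonneg (sub_nonneg.2 hx.2) _
  rw [Real.norm_eq_abs, abs_mul, abs_of_nonneg hpow]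
  exact mul_le_mul_of_nonneg_right (hf x hx) hpow

lemma intervalIntegral_eq_of_forall_Ioc_eq_zero {f : ℝ → ℝ} {a b c : ℝ} (hab : a ≤ b)
    (hbc : b ≤ c) (hf : ∀ x ∈ Ioc a b, f x = 0) : ∫ x in a..c, f x = ∫ x in b..c, f x := by
  rw [intervalIntegral.integral_of_le (hab.trans hbc), intervalIntegral.integral_of_le hbc]
  refine setIntegral_eq_of_subset_of_forall_sdiff_eq_zero measurableSet_Ioc
    (Ioc_subset_Ioc_left hab) fun x hx => hf x ⟨hx.1.1, ?_⟩
  by_contra! hbx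
  exact hx.2 ⟨hbx, hx.1.2⟩

section Volterra

variable {c C S δ : ℝ} {h : ℝ → ℝ}

lemma abs_le_of_eq_mul_integral_rpow (hα : 0 < α)
    (heq : ∀ t, 0 ≤ t → h t = c * ∫ x in (0 : ℝ)..t, h x * (t - x) ^ (α - 1))
    (hS : 0 ≤ S) (hzero : ∀ x ∈ Icc 0 S, h x = 0) {B : ℝ}
    (hB : ∀ x ∈ Icc S (S + δ), |h x| ≤ B) :
    ∀ t ∈ Icc S (S + δ), |h t| ≤ |c| * δ ^ α / α * B := by
  intro t ht
  have hB0 : 0 ≤ B := (abs_nonneg _).trans (hB S ⟨le_rfl, ht.1.trans ht.2⟩)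
  have hpow : (t - S) ^ α ≤ δ ^ α :=
    Real.rpow_le_rpow (sub_nonneg.2 ht.1) (by linarith [ht.2]) hα.le
  have hint : |∫ x in S..t, h x * (t - x) ^ (α - 1)| ≤ B * ((t - S) ^ α / α) :=
    abs_integral_mul_sub_rpow_le hα ht.1 fun x hx => hB x ⟨hx.1.le, hx.2.trans ht.2⟩
  rw [heq t (hS.trans ht.1), intervalIntegral_eq_of_forall_Ioc_eq_zero hS ht.1
    fun x hx => by rw [hzero x (Ioc_subset_Icc_self hx), zero_mul], abs_mul]
  calc |c| * |∫ x in S..t, h x * (t - x) ^ (α - 1)|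
      ≤ |c| * (B * ((t - S) ^ α / α)) := mul_le_mul_of_nonneg_left hint (abs_nonneg c)
    _ ≤ |c| * (B * (δ ^ α / α)) := by gcongr
    _ = |c| * δ ^ α / α * B := by ring

lemma eqOn_zero_of_eq_mul_integral_rpow (hα : 0 < α)
    (heq : ∀ t, 0 ≤ t → h t = c * ∫ x in (0 : ℝ)..t, h x * (t - x) ^ (α - 1))
    (hbd : ∀ t, 0 ≤ t → |h t| ≤ C) (hS : 0 ≤ S) (hδ : 0 ≤ δ) (hq : |c| * δ ^ α / α < 1)
    (hzero : ∀ x ∈ Icc 0 S, h x = 0) : ∀ t ∈ Icc S (S + δ), h t = 0 := by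
  set q := |c| * δ ^ α / α
  have hiter : ∀ k : ℕ, ∀ t ∈ Icc S (S + δ), |h t| ≤ q ^ k * C := by
    intro k
    induction k with
    | zero => exact fun t ht => by simpa using hbd t (hS.trans ht.1)
    | succ k ih =>
      intro t ht
      rw [pow_succ', mul_assoc]
      exact abs_le_of_eq_mul_integral_rpow hα heq hS hzero ih t ht
  have hlim : Tendsto (fun k : ℕ => q ^ k * C) atTop (nhds 0) := by
    simpa using (tendsto_pow_atTop_nhds_zero_of_lt_one (by positivity) hq).mul_const C
  intro t ht
  exact abs_nonpos_iff.1 (ge_of_tendsto' hlim fun k => hiter k t ht)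

theorem eq_zero_of_eq_mul_integral_rpow (hα : 0 < α) (hbd : ∀ t, 0 ≤ t → |h t| ≤ C)
    (heq : ∀ t, 0 ≤ t → h t = c * ∫ x in (0 : ℝ)..t, h x * (t - x) ^ (α - 1)) :
    ∀ t, 0 ≤ t → h t = 0 := by
  -- `δ ^ α = α / (|c| + 1)`, so the contraction factor is `|c| / (|c| + 1)`.
  set δ := (α / (|c| + 1)) ^ α⁻¹
  have hδ : 0 < δ := by positivity
  have hq : |c| * δ ^ α / α < 1 := by
    rw [Real.rpow_inv_rpow (by positivity) hα.ne', div_lt_one hα, mul_div_assoc',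
      div_lt_iff₀ (by positivity)]
    nlinarith
  have hsteps : ∀ n : ℕ, ∀ x ∈ Icc 0 (n * δ), h x = 0 := by
    intro n
    induction n with
    | zero => exact fun x hx => by simpa [(by simpa using hx : x = 0)] using heq 0 le_rfl
    | succ n ih =>
      intro x hx
      rcases le_or_gt x (n * δ) with hxn | hxn
      · exact ih x ⟨hx.1, hxn⟩
      · refine eqOn_zero_of_eq_mul_integral_rpow hα heq hbd (by positivity) hδ.le hq ih x
          ⟨hxn.le, ?_⟩
        simpa [add_mul] using hx.2
  intro t ht
  obtain ⟨n, hn⟩ := exists_nat_ge (t / δ)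
  exact hsteps n t ⟨ht, (div_le_iff₀ hδ).1 hn⟩

end Volterra

theorem stmt3_general (α : ℝ) (hα : α ∈ Ioc (0 : ℝ) 1)
    (h : ℝ → ℝ)
    (C : ℝ) (hbd : ∀ t, 0 ≤ t → |h t| ≤ C)
    (heq : ∀ t, 0 ≤ t →
      h t = -(Real.Gamma (1 + α) / Real.Gamma α)
        * ∫ x in (0 : ℝ)..t, h x * (t - x) ^ (α - 1)) :
    ∀ t, 0 ≤ t → h t = 0 :=
  eq_zero_of_eq_mul_integral_rpow hα.1 hbd heq

theorem stmt3 (α : ℝ) (hα : α ∈ Ioc (0 : ℝ) 1)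
    (h : ℝ → ℝ) (hmeas : Measurable h)
    (C : ℝ) (hbd : ∀ t, 0 ≤ t → |h t| ≤ C)
    (heq : ∀ t, 0 ≤ t →
      h t = -(Real.Gamma (1 + α) / Real.Gamma α)
        * ∫ x in (0 : ℝ)..t, h x * (t - x) ^ (α - 1)) :
    ∀ t, 0 ≤ t → h t = 0 :=
  stmt3_general α hα h C hbd heq
end

section
/- Let α ∈ (0,1], let (Ω, 𝓕, ℙ) be a probability space, and let R, R̃ : Ω → [0,∞] be measurable. Suppose that for every t ≥ 0, ℙ(R ≤ t) = α ∫_0^t (1 − ℙ(R̃ ≤ u)) (t − u)^{α-1} du. Then for every s > 0, E[e^{−sR}] = (Γ(1+α)/s^α) (1 − E[e^{−sR̃}]), where e^{−s·∞} := 0. -/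
/-!
Write `G(u) = ℙ(R̃ ≤ u)` and work with `[0,∞]`-valued Laplace transforms
`L f (s) = ∫_{(0,∞)} e^{-st} f(t) dt`. Layer-cake (Tonelli) gives
`E[e^{-sR}] = s · L(ℙ(R ≤ ·))(s)`; applied to `R̃`, together with `s · L 1 (s) = 1`, it gives
`s · L(1 - G)(s) = 1 - E[e^{-sR̃}]`. The hypothesis says that `ℙ(R ≤ ·)` is `α` times the
convolution on `(0,∞)` of `1 - G` with `t ^ (α - 1)`; the Laplace transform turns this convolution
into a product, and `L(t ^ (α - 1))(s) = Γ(α) / s ^ α`. Since `α Γ(α) = Γ(1 + α)`, the identity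
follows.
-/

open MeasureTheory Set
open scoped ENNReal

/-- Laplace transform `E[e^{-sR}]` of a `[0,∞]`-valued random variable, with the
convention `e^{-s·∞} = 0`. -/
noncomputable def laplaceENN {Ω : Type*} [MeasurableSpace Ω] (μ : Measure Ω)
    (R : Ω → ℝ≥0∞) (s : ℝ) : ℝ :=
  ∫ ω, (if R ω = ⊤ then 0 else Real.exp (-s * (R ω).toReal)) ∂μ

open Real

theorem lintegral_lconvolution {G : Type*} [MeasurableSpace G] [AddGroup G] [MeasurableAdd₂ G]
    [MeasurableNeg G] {μ : Measure G} [SFinite μ] [μ.IsAddLeftInvariant] {f g : G → ℝ≥0∞}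
    (hf : Measurable f) (hg : Measurable g) :
    ∫⁻ x, (f ⋆ₗ[μ] g) x ∂μ = (∫⁻ x, f x ∂μ) * ∫⁻ x, g x ∂μ := by
  simp only [lconvolution_def]
  rw [lintegral_lintegral_swap (by fun_prop), ← lintegral_mul_const _ hf]
  congr 1 with y
  rw [lintegral_const_mul _ (by fun_prop), lintegral_add_left_eq_self g (-y)]

theorem lconvolution_indicator_Ioi_apply (f g : ℝ → ℝ≥0∞) (t : ℝ) :
    ((Ioi 0).indicator f ⋆ₗ (Ioi 0).indicator g) t = ∫⁻ u in Ioo 0 t, f u * g (t - u) := by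
  rw [lconvolution_def, ← lintegral_indicator measurableSet_Ioo]
  congr 1 with u
  simp only [indicator_apply, mem_Ioi, mem_Ioo, neg_add_eq_sub, sub_pos]
  split_ifs <;> simp_all

noncomputable def lintegralLaplace (f : ℝ → ℝ≥0∞) (s : ℝ) : ℝ≥0∞ :=
  ∫⁻ t in Ioi 0, ENNReal.ofReal (exp (-s * t)) * f t

theorem lintegralLaplace_eq_lintegral_indicator (f : ℝ → ℝ≥0∞) (s : ℝ) :
    lintegralLaplace f s
      = ∫⁻ t, (Ioi 0).indicator (fun t => ENNReal.ofReal (exp (-s * t)) * f t) t :=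
  (lintegral_indicator measurableSet_Ioi _).symm

theorem lintegralLaplace_congr {f g : ℝ → ℝ≥0∞} (s : ℝ) (h : ∀ t ∈ Ioi 0, f t = g t) :
    lintegralLaplace f s = lintegralLaplace g s :=
  setLIntegral_congr_fun measurableSet_Ioi fun t ht => by rw [h t ht]

theorem lintegralLaplace_const_mul {c : ℝ≥0∞} (hc : c ≠ ⊤) (f : ℝ → ℝ≥0∞) (s : ℝ) :
    lintegralLaplace (fun t => c * f t) s = c * lintegralLaplace f s := by
  rw [lintegralLaplace, lintegralLaplace, ← lintegral_const_mul' _ _ hc]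
  congr 1 with t
  ring

theorem ofReal_mul_lintegral_exp_Ioi {s : ℝ} (hs : 0 < s) (a : ℝ) :
    ENNReal.ofReal s * ∫⁻ t in Ioi a, ENNReal.ofReal (exp (-s * t))
      = ENNReal.ofReal (exp (-s * a)) := by
  rw [← ofReal_integral_eq_lintegral_ofReal (integrableOn_exp_mul_Ioi (neg_lt_zero.2 hs) a)
      (ae_of_all _ fun t => (exp_pos _).le),
    integral_exp_mul_Ioi (neg_lt_zero.2 hs), ← ENNReal.ofReal_mul hs.le]
  congr 1
  field_simp

theorem lintegralLaplace_conv {f g : ℝ → ℝ≥0∞} (hf : Measurable f) (hg : Measurable g)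
    (s : ℝ) :
    lintegralLaplace (fun t => ∫⁻ u in Ioo 0 t, f u * g (t - u)) s
      = lintegralLaplace f s * lintegralLaplace g s := by
  set e : ℝ → ℝ≥0∞ := fun t => ENNReal.ofReal (exp (-s * t))
  have he : ∀ t u, e u * e (t - u) = e t := fun t u => by
    simp only [e, ← ENNReal.ofReal_mul (exp_pos _).le, ← exp_add]
    ring_nf
  -- `e` is a character of `(ℝ, +)`, so multiplying by it commutes with convolution.
  have htilt : (Ioi 0).indicator (fun t => e t * ∫⁻ u in Ioo 0 t, f u * g (t - u))
      = (Ioi 0).indicator (fun t => e t * f t) ⋆ₗ (Ioi 0).indicator (fun t => e t * g t) := by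
    ext t
    rw [lconvolution_indicator_Ioi_apply]
    calc _ = e t * ∫⁻ u in Ioo 0 t, f u * g (t - u) := by
          by_cases ht : t ∈ Ioi 0
          · exact indicator_of_mem ht _
          · rw [indicator_of_notMem ht, Ioo_eq_empty (by simpa using ht), Measure.restrict_empty,
              lintegral_zero_measure, mul_zero]
      _ = ∫⁻ u in Ioo 0 t, e u * f u * (e (t - u) * g (t - u)) := by
          rw [← lintegral_const_mul' _ _ ENNReal.ofReal_ne_top]
          congr 1 with u
          change e t * _ = _
          rw [← he t u]
          ring
  simp only [lintegralLaplace_eq_lintegral_indicator]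
  rw [htilt, lintegral_lconvolution ((by fun_prop : Measurable _).indicator measurableSet_Ioi)
    ((by fun_prop : Measurable _).indicator measurableSet_Ioi)]

theorem lintegralLaplace_rpow {a s : ℝ} (ha : 0 < a) (hs : 0 < s) :
    lintegralLaplace (fun t => ENNReal.ofReal (t ^ (a - 1))) s
      = ENNReal.ofReal ((1 / s) ^ a * Gamma a) := by
  rw [← integral_rpow_mul_exp_neg_mul_Ioi ha hs, ofReal_integral_eq_lintegral_ofReal]
  · refine setLIntegral_congr_fun measurableSet_Ioi fun t ht => ?_
    rw [← ENNReal.ofReal_mul (exp_pos _).le, mul_comm, neg_mul]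
  · have := integrableOn_rpow_mul_exp_neg_mul_rpow (s := a - 1) (p := 1) (by linarith) one_pos hs
    simpa only [rpow_one, neg_mul, IntegrableOn] using this
  · filter_upwards [self_mem_ae_restrict measurableSet_Ioi] with t ht
    exact mul_nonneg (rpow_nonneg (le_of_lt ht) _) (exp_pos _).le

theorem ofReal_mul_lintegralLaplace_indicator_le {s : ℝ} (hs : 0 < s) (x : ℝ≥0∞) :
    ENNReal.ofReal s * lintegralLaplace ({t | x ≤ ENNReal.ofReal t}.indicator 1) s
      = ENNReal.ofReal (if x = ⊤ then 0 else exp (-s * x.toReal)) := by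
  rcases eq_or_ne x ⊤ with rfl | hx
  · simp [lintegralLaplace]
  have hS : MeasurableSet {t | x ≤ ENNReal.ofReal t} :=
    measurableSet_le measurable_const ENNReal.measurable_ofReal
  have hSIci : {t | x ≤ ENNReal.ofReal t} ∩ Ici 0 = Ici x.toReal := by
    ext t
    simp only [mem_inter_iff, mem_ofPred_eq, mem_Ici]
    constructor
    · rintro ⟨hxt, ht⟩
      exact (ENNReal.le_ofReal_iff_toReal_le hx ht).1 hxt
    · intro ht
      have ht0 : 0 ≤ t := ENNReal.toReal_nonneg.trans ht
      exact ⟨(ENNReal.le_ofReal_iff_toReal_le hx ht0).2 ht, ht0⟩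
  have hind : ∀ t, ENNReal.ofReal (exp (-s * t)) * {t | x ≤ ENNReal.ofReal t}.indicator 1 t
      = {t | x ≤ ENNReal.ofReal t}.indicator (fun t => ENNReal.ofReal (exp (-s * t))) t := by
    intro t
    by_cases ht : t ∈ {t | x ≤ ENNReal.ofReal t} <;> simp [ht]
  -- `Ioi 0` and `Ici 0` differ by a null set, and on `Ici 0` the condition reads `x.toReal ≤ t`.
  rw [lintegralLaplace, lintegral_congr hind, setLIntegral_congr Ioi_ae_eq_Ici,
    lintegral_indicator hS, Measure.restrict_restrict hS, hSIci,
    ← setLIntegral_congr Ioi_ae_eq_Ici, ofReal_mul_lintegral_exp_Ioi hs, if_neg hx]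

theorem ofReal_intervalIntegral_mul_rpow_sub {g : ℝ → ℝ} (hg : Measurable g) (hg0 : 0 ≤ g)
    {C : ℝ} (hgC : ∀ u, g u ≤ C) {p t : ℝ} (hp : 0 < p) (ht : 0 ≤ t) :
    ENNReal.ofReal (∫ u in 0..t, g u * (t - u) ^ (p - 1))
      = ∫⁻ u in Ioo 0 t, ENNReal.ofReal (g u) * ENNReal.ofReal ((t - u) ^ (p - 1)) := by
  have hker : IntegrableOn (fun u => (t - u) ^ (p - 1)) (Ioc 0 t) := by
    rw [← intervalIntegrable_iff_integrableOn_Ioc_of_le ht]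
    have := (intervalIntegral.intervalIntegrable_rpow' (a := 0) (b := t) (r := p - 1)
      (by linarith)).comp_sub_left t
    rw [sub_zero, sub_self] at this
    exact this.symm
  have hint : IntegrableOn (fun u => g u * (t - u) ^ (p - 1)) (Ioc 0 t) :=
    hker.bdd_mul hg.aestronglyMeasurable (c := C) (ae_of_all _ fun u => by
      rw [Real.norm_of_nonneg (hg0 u)]; exact hgC u)
  rw [intervalIntegral.integral_of_le ht, integral_Ioc_eq_integral_Ioo,
    ofReal_integral_eq_lintegral_ofReal (hint.mono_set Ioo_subset_Ioc_self)]
  · exact setLIntegral_congr_fun measurableSet_Ioo fun u _ => ENNReal.ofReal_mul (hg0 u)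
  · filter_upwards [self_mem_ae_restrict measurableSet_Ioo] with u hu
    exact mul_nonneg (hg0 u) (rpow_nonneg (sub_nonneg.2 hu.2.le) _)

theorem setOf_lt_eq_compl_setOf_le {α β : Type*} [LinearOrder β] (f : α → β) (b : β) :
    {a | b < f a} = {a | f a ≤ b}ᶜ := by
  ext
  simp

section RandomVariable

variable {Ω : Type*} [MeasurableSpace Ω] (μ : Measure Ω) {R : Ω → ℝ≥0∞} {s : ℝ}

theorem antitone_measure_ofReal_lt : Antitone fun t : ℝ => μ {ω | ENNReal.ofReal t < R ω} :=
  fun _ _ htu => measure_mono fun _ hω => (ENNReal.ofReal_le_ofReal htu).trans_lt hω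

theorem laplaceENN_nonneg : 0 ≤ laplaceENN μ R s :=
  integral_nonneg fun ω => by dsimp only; split_ifs <;> positivity

theorem integrable_laplaceENN_integrand [IsFiniteMeasure μ] (hR : Measurable R) (hs : 0 ≤ s) :
    Integrable (fun ω => if R ω = ⊤ then 0 else exp (-s * (R ω).toReal)) μ := by
  refine Integrable.of_bound (C := 1) ?_ (ae_of_all _ fun ω => ?_)
  · exact (Measurable.ite (hR (measurableSet_singleton ⊤)) measurable_const
      (by fun_prop)).aestronglyMeasurable
  · split_ifs
    · simp
    · rw [Real.norm_of_nonneg (exp_pos _).le, exp_le_one_iff, neg_mul, neg_nonpos]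
      exact mul_nonneg hs ENNReal.toReal_nonneg

theorem ofReal_laplaceENN [IsFiniteMeasure μ] (hR : Measurable R) (hs : 0 < s) :
    ENNReal.ofReal (laplaceENN μ R s)
      = ENNReal.ofReal s * lintegralLaplace (fun t => μ {ω | R ω ≤ ENNReal.ofReal t}) s := by
  have hA : MeasurableSet {p : Ω × ℝ | R p.1 ≤ ENNReal.ofReal p.2} :=
    measurableSet_le (hR.comp measurable_fst) (ENNReal.measurable_ofReal.comp measurable_snd)
  have hF : Measurable fun p : Ω × ℝ =>
      ENNReal.ofReal (exp (-s * p.2)) * {p : Ω × ℝ | R p.1 ≤ ENNReal.ofReal p.2}.indicator 1 p :=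
    (by fun_prop : Measurable fun p : Ω × ℝ => ENNReal.ofReal (exp (-s * p.2))).mul
      (measurable_const.indicator hA)
  rw [laplaceENN, ofReal_integral_eq_lintegral_ofReal
    (integrable_laplaceENN_integrand μ hR hs.le) (ae_of_all _ fun ω => by positivity)]
  simp only [← ofReal_mul_lintegralLaplace_indicator_le hs, lintegralLaplace]
  rw [lintegral_const_mul _ hF.lintegral_prod_right, lintegral_lintegral_swap hF.aemeasurable]
  congr 1
  refine setLIntegral_congr_fun measurableSet_Ioi fun t _ => ?_
  rw [lintegral_const_mul' _ _ ENNReal.ofReal_ne_top,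
    ← lintegral_indicator_one (measurableSet_le hR measurable_const)]
  rfl

theorem ofReal_mul_lintegralLaplace_measure_gt_add [IsProbabilityMeasure μ] (hR : Measurable R)
    (hs : 0 < s) :
    ENNReal.ofReal s * lintegralLaplace (fun t => μ {ω | ENNReal.ofReal t < R ω}) s
      + ENNReal.ofReal (laplaceENN μ R s) = 1 := by
  have hsplit : ∀ t, ENNReal.ofReal (exp (-s * t)) * μ {ω | ENNReal.ofReal t < R ω}
      + ENNReal.ofReal (exp (-s * t)) * μ {ω | R ω ≤ ENNReal.ofReal t}
      = ENNReal.ofReal (exp (-s * t)) := fun t => by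
    rw [← mul_add, setOf_lt_eq_compl_setOf_le, add_comm,
      prob_add_prob_compl (measurableSet_le hR measurable_const), mul_one]
  have he : Measurable fun t : ℝ => ENNReal.ofReal (exp (-s * t)) := by fun_prop
  rw [ofReal_laplaceENN μ hR hs, ← mul_add, lintegralLaplace, lintegralLaplace,
    ← lintegral_add_left (he.fun_mul (antitone_measure_ofReal_lt μ).measurable),
    lintegral_congr hsplit, ofReal_mul_lintegral_exp_Ioi hs 0, mul_zero, exp_zero,
    ENNReal.ofReal_one]

theorem laplaceENN_le_one [IsProbabilityMeasure μ] (hR : Measurable R) (hs : 0 < s) :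
    laplaceENN μ R s ≤ 1 :=
  ENNReal.ofReal_le_one.1 <|
    le_add_self.trans_eq (ofReal_mul_lintegralLaplace_measure_gt_add μ hR hs)

theorem ofReal_mul_lintegralLaplace_measure_gt [IsProbabilityMeasure μ] (hR : Measurable R)
    (hs : 0 < s) :
    ENNReal.ofReal s * lintegralLaplace (fun t => μ {ω | ENNReal.ofReal t < R ω}) s
      = ENNReal.ofReal (1 - laplaceENN μ R s) := by
  rw [ENNReal.ofReal_sub _ (laplaceENN_nonneg μ), ENNReal.ofReal_one]
  exact ENNReal.eq_sub_of_add_eq ENNReal.ofReal_ne_top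
    (ofReal_mul_lintegralLaplace_measure_gt_add μ hR hs)

theorem ofReal_mul_intervalIntegral_one_sub_measure_le [IsProbabilityMeasure μ]
    (hR : Measurable R) {p t : ℝ} (hp : 0 < p) (ht : 0 ≤ t) :
    ENNReal.ofReal
        (p * ∫ u in 0..t, (1 - (μ {ω | R ω ≤ ENNReal.ofReal u}).toReal) * (t - u) ^ (p - 1))
      = ENNReal.ofReal p * ∫⁻ u in Ioo 0 t,
          μ {ω | ENNReal.ofReal u < R ω} * ENNReal.ofReal ((t - u) ^ (p - 1)) := by
  have hcompl : ∀ u, 1 - (μ {ω | R ω ≤ ENNReal.ofReal u}).toReal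
      = (μ {ω | ENNReal.ofReal u < R ω}).toReal := fun u => by
    rw [setOf_lt_eq_compl_setOf_le]
    exact (probReal_compl_eq_one_sub (measurableSet_le hR measurable_const)).symm
  have hmeas : Measurable fun u : ℝ => (μ {ω | ENNReal.ofReal u < R ω}).toReal :=
    Antitone.measurable fun _ _ huv =>
      ENNReal.toReal_mono (measure_ne_top _ _) (antitone_measure_ofReal_lt μ huv)
  simp only [hcompl]
  rw [ENNReal.ofReal_mul hp.le, ofReal_intervalIntegral_mul_rpow_sub hmeas
    (fun _ => ENNReal.toReal_nonneg) (fun _ => measureReal_le_one) hp ht]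
  simp only [ENNReal.ofReal_toReal (measure_ne_top μ _)]

end RandomVariable

theorem stmt4 {Ω : Type*} [MeasurableSpace Ω] (μ : Measure Ω) [IsProbabilityMeasure μ]
    (α : ℝ) (hα : α ∈ Ioc (0 : ℝ) 1)
    (R Rt : Ω → ℝ≥0∞) (hR : Measurable R) (hRt : Measurable Rt)
    (h : ∀ t : ℝ, 0 ≤ t →
      (μ {ω | R ω ≤ ENNReal.ofReal t}).toReal
        = α * ∫ u in (0 : ℝ)..t,
            (1 - (μ {ω | Rt ω ≤ ENNReal.ofReal u}).toReal) * (t - u) ^ (α - 1)) :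
    ∀ s : ℝ, 0 < s →
      laplaceENN μ R s = (Real.Gamma (1 + α) / s ^ α) * (1 - laplaceENN μ Rt s) := by
  intro s hs
  set F : ℝ → ℝ≥0∞ := fun u => μ {ω | ENNReal.ofReal u < Rt ω}
  have hconv : ∀ t ∈ Ioi (0 : ℝ), μ {ω | R ω ≤ ENNReal.ofReal t}
      = ENNReal.ofReal α * ∫⁻ u in Ioo 0 t, F u * ENNReal.ofReal ((t - u) ^ (α - 1)) :=
    fun t ht => by
      rw [← ENNReal.ofReal_toReal (measure_ne_top μ _), h t (le_of_lt ht),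
        ofReal_mul_intervalIntegral_one_sub_measure_le μ hRt hα.1 (le_of_lt ht)]
  have hLRt := laplaceENN_le_one μ hRt hs
  have hmain : ENNReal.ofReal (laplaceENN μ R s)
      = ENNReal.ofReal (α * (1 - laplaceENN μ Rt s) * ((1 / s) ^ α * Gamma α)) := by
    rw [ofReal_laplaceENN μ hR hs, lintegralLaplace_congr s hconv,
      lintegralLaplace_const_mul ENNReal.ofReal_ne_top,
      lintegralLaplace_conv (g := fun v => ENNReal.ofReal (v ^ (α - 1)))
        (antitone_measure_ofReal_lt μ).measurable (by fun_prop),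
      lintegralLaplace_rpow hα.1 hs]
    calc _ = ENNReal.ofReal α * (ENNReal.ofReal s * lintegralLaplace F s)
          * ENNReal.ofReal ((1 / s) ^ α * Gamma α) := by ring
      _ = _ := by
        rw [ofReal_mul_lintegralLaplace_measure_gt μ hRt hs, ← ENNReal.ofReal_mul hα.1.le,
          ← ENNReal.ofReal_mul (mul_nonneg hα.1.le (sub_nonneg.2 hLRt))]
  rw [ENNReal.ofReal_eq_ofReal_iff (laplaceENN_nonneg μ) (mul_nonneg (mul_nonneg hα.1.le
    (sub_nonneg.2 hLRt)) (mul_nonneg (by positivity) (Gamma_pos_of_pos hα.1).le))] at hmain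
  rw [hmain, add_comm, Gamma_add_one hα.1.ne', one_div, inv_rpow hs.le]
  field_simp
end

section
/- Let p > 0 and let g_p : [0,1/2] → [0,1] be defined by g_p(x) = x + 2^p x^{p+1}. Then g_p is a strictly increasing continuous bijection from [0,1/2] onto [0,1], and its inverse g_p^{-1} satisfies lim_{x→0+} (x − g_p^{-1}(x)) / x^{p+1} = 2^p, i.e. x − g_p^{-1}(x) ∼ 2^p x^{p+1} as x → 0+. -/
open Filter Set

/-- The first (left) branch of the LSV map: `g_p(x) = x + 2^p x^(p+1)`. -/
noncomputable def lsvBranch (p : ℝ) (x : ℝ) : ℝ := x + 2 ^ p * x ^ (p + 1)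

theorem stmt7 (p : ℝ) (hp : 0 < p) :
    StrictMonoOn (lsvBranch p) (Icc 0 (1 / 2)) ∧
    ContinuousOn (lsvBranch p) (Icc 0 (1 / 2)) ∧
    BijOn (lsvBranch p) (Icc 0 (1 / 2)) (Icc 0 1) ∧
    ∀ ginv : ℝ → ℝ,
      (∀ x ∈ Icc (0 : ℝ) 1, ginv x ∈ Icc (0 : ℝ) (1 / 2) ∧ lsvBranch p (ginv x) = x) →
      Tendsto (fun x => (x - ginv x) / x ^ (p + 1)) (nhdsWithin 0 (Ioi 0))
        (nhds (2 ^ p)) := by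
  have hp1 : (0:ℝ) < p + 1 := by linarith
  have h2p : (0:ℝ) < (2:ℝ) ^ p := Real.rpow_pos_of_pos two_pos p
  have hmono : StrictMonoOn (lsvBranch p) (Icc 0 (1 / 2)) := by
    intro a ha b hb hab
    have h : a ^ (p+1) < b ^ (p+1) := Real.rpow_lt_rpow ha.1 hab hp1
    unfold lsvBranch
    nlinarith [h2p]
  have hcont : ContinuousOn (lsvBranch p) (Icc 0 (1 / 2)) := by
    intro x hx
    exact (continuousAt_id.add
      ((Real.continuousAt_rpow_const x (p+1) (Or.inr hp1.le)).const_mul _)).continuousWithinAt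
  have hf0 : lsvBranch p 0 = 0 := by
    simp [lsvBranch, Real.zero_rpow hp1.ne']
  have hf12 : lsvBranch p (1/2) = 1 := by
    unfold lsvBranch
    have h1 : ((1:ℝ)/2) ^ (p+1) = ((2:ℝ) ^ (p+1))⁻¹ := by
      rw [show (1:ℝ)/2 = 2⁻¹ by norm_num, Real.inv_rpow (by norm_num)]
    rw [h1, ← Real.rpow_neg (by norm_num), ← Real.rpow_add two_pos]
    have : p + -(p+1) = -1 := by ring
    rw [this, Real.rpow_neg_one]
    norm_num
  have hbij : BijOn (lsvBranch p) (Icc 0 (1 / 2)) (Icc 0 1) := by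
    refine ⟨?_, hmono.injOn, ?_⟩
    · intro x hx
      constructor
      · have := hmono.monotoneOn (left_mem_Icc.2 (by norm_num)) hx hx.1
        rw [hf0] at this; exact this
      · have := hmono.monotoneOn hx (right_mem_Icc.2 (by norm_num)) hx.2
        rw [hf12] at this; exact this
    · have := intermediate_value_Icc (by norm_num : (0:ℝ) ≤ 1/2) hcont
      rw [hf0, hf12] at this
      exact this
  refine ⟨hmono, hcont, hbij, ?_⟩
  intro ginv hg
  -- auxiliary tendsto facts
  have htp : Tendsto (fun x : ℝ => 2 ^ p * x ^ p) (nhdsWithin 0 (Ioi 0)) (nhds 0) := by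
    have h1 : Tendsto (fun x : ℝ => x ^ p) (nhds 0) (nhds ((0:ℝ) ^ p)) :=
      (Real.continuousAt_rpow_const 0 p (Or.inr hp.le)).tendsto
    rw [Real.zero_rpow hp.ne'] at h1
    have := (h1.const_mul ((2:ℝ)^p)).mono_left (nhdsWithin_le_nhds (s := Ioi (0:ℝ)))
    simpa using this
  have hlow : Tendsto (fun x : ℝ => 2 ^ p * (1 - 2 ^ p * x ^ p) ^ (p+1))
      (nhdsWithin 0 (Ioi 0)) (nhds (2 ^ p)) := by
    have h1 : Tendsto (fun x : ℝ => 1 - 2 ^ p * x ^ p) (nhdsWithin 0 (Ioi 0)) (nhds 1) := by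
      have := (tendsto_const_nhds (x := (1:ℝ))).sub htp
      simpa using this
    have h2 : Tendsto (fun y : ℝ => y ^ (p+1)) (nhds 1) (nhds ((1:ℝ) ^ (p+1))) :=
      (Real.continuousAt_rpow_const 1 (p+1) (Or.inl one_ne_zero)).tendsto
    rw [Real.one_rpow] at h2
    have := (h2.comp h1).const_mul ((2:ℝ)^p)
    simpa using this
  -- squeeze
  refine tendsto_of_tendsto_of_tendsto_of_le_of_le' hlow tendsto_const_nhds ?_ ?_
  · -- lower bound eventually
    have hev1 : ∀ᶠ x : ℝ in nhdsWithin 0 (Ioi 0), 2 ^ p * x ^ p ≤ 1 :=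
      htp.eventually_le_const (by norm_num)
    have hev2 : ∀ᶠ x : ℝ in nhdsWithin 0 (Ioi 0), x ∈ Ioi (0:ℝ) := eventually_mem_nhdsWithin
    have hev3 : ∀ᶠ x : ℝ in nhdsWithin 0 (Ioi 0), x < 1 :=
      eventually_nhdsWithin_of_eventually_nhds ((tendsto_id (α := ℝ)).eventually_lt_const (by norm_num))
    filter_upwards [hev1, hev2, hev3] with x hsmall hx hx1
    have hx : (0:ℝ) < x := hx
    obtain ⟨hy, heq⟩ := hg x ⟨hx.le, hx1.le⟩
    set y := ginv x with hy'
    have hy0 : 0 ≤ y := hy.1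
    have heq' : x - y = 2 ^ p * y ^ (p+1) := by
      unfold lsvBranch at heq; linarith
    have hypos : 0 ≤ (2:ℝ) ^ p * y ^ (p+1) := by positivity
    have hyx : y ≤ x := by linarith
    have hxp1 : (0:ℝ) < x ^ (p+1) := Real.rpow_pos_of_pos hx _
    have hylb : x * (1 - 2 ^ p * x ^ p) ≤ y := by
      have h1 : y ^ (p+1) ≤ x ^ (p+1) := Real.rpow_le_rpow hy0 hyx hp1.le
      have h2 : x ^ (p+1) = x * x ^ p := by
        rw [Real.rpow_add hx, Real.rpow_one]; ring
      nlinarith [h2p]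
    have hfac : (0:ℝ) ≤ 1 - 2 ^ p * x ^ p := by linarith
    have h3 : (x * (1 - 2 ^ p * x ^ p)) ^ (p+1) ≤ y ^ (p+1) :=
      Real.rpow_le_rpow (by positivity) hylb hp1.le
    rw [Real.mul_rpow hx.le hfac] at h3
    rw [heq']
    rw [le_div_iff₀ hxp1]
    calc 2 ^ p * (1 - 2 ^ p * x ^ p) ^ (p+1) * x ^ (p+1)
        = 2 ^ p * (x ^ (p+1) * (1 - 2 ^ p * x ^ p) ^ (p+1)) := by ring
      _ ≤ 2 ^ p * y ^ (p+1) := by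
          exact mul_le_mul_of_nonneg_left h3 h2p.le
  · -- upper bound eventually
    have hev2 : ∀ᶠ x : ℝ in nhdsWithin 0 (Ioi 0), x ∈ Ioi (0:ℝ) := eventually_mem_nhdsWithin
    have hev3 : ∀ᶠ x : ℝ in nhdsWithin 0 (Ioi 0), x < 1 :=
      eventually_nhdsWithin_of_eventually_nhds ((tendsto_id (α := ℝ)).eventually_lt_const (by norm_num))
    filter_upwards [hev2, hev3] with x hx hx1
    have hx : (0:ℝ) < x := hx
    obtain ⟨hy, heq⟩ := hg x ⟨hx.le, hx1.le⟩
    set y := ginv x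
    have hy0 : 0 ≤ y := hy.1
    have heq' : x - y = 2 ^ p * y ^ (p+1) := by
      unfold lsvBranch at heq; linarith
    have hypos : 0 ≤ (2:ℝ) ^ p * y ^ (p+1) := by positivity
    have hyx : y ≤ x := by linarith
    have hxp1 : (0:ℝ) < x ^ (p+1) := Real.rpow_pos_of_pos hx _
    have h1 : y ^ (p+1) ≤ x ^ (p+1) := Real.rpow_le_rpow hy0 hyx hp1.le
    rw [heq', div_le_iff₀ hxp1]
    nlinarith [h2p]
end

section
/- Let p > 0 and let g_p : [0,1/2] → [0,1], g_p(x) = x + 2^p x^{p+1}, with inverse g_p^{-1}. Define I(η) := ∫_η^1 dx / (x − g_p^{-1}(x)) for η ∈ (0,1]. Then lim_{η→0+} η^p · I(η) = 1/(p·2^p); equivalently, writing α := 1/p, I(η) ∼ α / (2^{1/α} η^{1/α}) as η → 0+. -/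
/-!
Substituting `x = g_p y` turns `dx / (x - g_p⁻¹ x)` into `(y ^ (-p-1) / 2 ^ p + (p + 1) / y) dy`,
so with `a = g_p⁻¹ η` the integral is elementary:
`I(η) = (a ^ (-p) - 2 ^ p) / (p 2 ^ p) - (p + 1) log (2a)`.
Since `η = a (1 + 2 ^ p a ^ p)`, `η ^ p I(η)` is an explicit function of `a` which tends to
`1 / (p 2 ^ p)` as `a → 0⁺` (the logarithm is killed by `a ^ p`), and `a → 0⁺` as `η → 0⁺`
because `0 < a ≤ η`.
-/

open Filter Set MeasureTheory

open Real Topology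

section Branch

variable {p : ℝ}

lemma lsvBranch_zero (hp : 0 ≤ p) : lsvBranch p 0 = 0 := by
  simp [lsvBranch, zero_rpow (by linarith : p + 1 ≠ 0)]

lemma lsvBranch_half (p : ℝ) : lsvBranch p (1 / 2) = 1 := by
  rw [lsvBranch, rpow_add_one (by norm_num), ← mul_assoc, ← mul_rpow (by norm_num) (by norm_num)]
  norm_num

lemma lsvBranch_eq_mul {x : ℝ} (hx : x ≠ 0) : lsvBranch p x = x * (1 + 2 ^ p * x ^ p) := by
  rw [lsvBranch, rpow_add_one hx]
  ring

lemma self_le_lsvBranch {x : ℝ} (hx : 0 ≤ x) : x ≤ lsvBranch p x :=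
  le_add_of_nonneg_right (by positivity)

lemma hasDerivAt_lsvBranch (hp : 0 ≤ p) (x : ℝ) :
    HasDerivAt (lsvBranch p) (1 + 2 ^ p * ((p + 1) * x ^ p)) x := by
  have h := hasDerivAt_rpow_const (x := x) (p := p + 1) (Or.inr (by linarith))
  rw [add_sub_cancel_right] at h
  exact (hasDerivAt_id x).add (h.const_mul _)

lemma continuous_lsvBranch (hp : 0 ≤ p) : Continuous (lsvBranch p) :=
  continuous_iff_continuousAt.2 fun x => (hasDerivAt_lsvBranch hp x).continuousAt

lemma strictMonoOn_lsvBranch (hp : 0 ≤ p) : StrictMonoOn (lsvBranch p) (Ici 0) := by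
  intro x hx y _ hxy
  have := rpow_lt_rpow hx hxy (by linarith : 0 < p + 1)
  unfold lsvBranch
  gcongr

lemma mapsTo_lsvBranch (hp : 0 ≤ p) : MapsTo (lsvBranch p) (Icc 0 (1 / 2)) (Icc 0 1) := by
  simpa only [lsvBranch_zero hp, lsvBranch_half] using
    ((strictMonoOn_lsvBranch hp).monotoneOn.mono
      (Icc_subset_Ici_self : Icc (0 : ℝ) (1 / 2) ⊆ _)).mapsTo_Icc

end Branch

lemma integral_inv_add_rpow_div {p : ℝ} (hp : p ≠ 0) {a : ℝ} (ha : 0 < a) :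
    ∫ y in a..1 / 2, ((p + 1) * y⁻¹ + y ^ (-p - 1) / 2 ^ p) =
      (a ^ (-p) - 2 ^ p) / (p * 2 ^ p) - (p + 1) * log (2 * a) := by
  have hpos : ∀ y ∈ uIcc a (1 / 2), 0 < y := fun y hy =>
    (lt_inf_iff.2 ⟨ha, one_half_pos⟩).trans_le hy.1
  have hantideriv : ∀ y ∈ uIcc a (1 / 2),
      HasDerivAt (fun y => (p + 1) * log y - y ^ (-p) / (p * 2 ^ p))
        ((p + 1) * y⁻¹ + y ^ (-p - 1) / 2 ^ p) y := by
    intro y hy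
    have hy0 := hpos y hy
    refine (((hasDerivAt_log hy0.ne').const_mul (p + 1)).sub
      ((hasDerivAt_rpow_const (p := -p) (Or.inl hy0.ne')).div_const (p * 2 ^ p))).congr_deriv ?_
    field_simp
    ring
  have hcont : ContinuousOn (fun y => (p + 1) * y⁻¹ + y ^ (-p - 1) / 2 ^ p) (uIcc a (1 / 2)) :=
    (continuousOn_const.mul (continuousOn_inv₀.mono fun y hy => (hpos y hy).ne')).add
      ((continuousOn_id.rpow_const fun y hy => Or.inl (hpos y hy).ne').div_const _)
  rw [intervalIntegral.integral_eq_sub_of_hasDerivAt hantideriv hcont.intervalIntegrable,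
    one_div, log_inv, inv_rpow zero_le_two, rpow_neg zero_le_two, inv_inv,
    log_mul two_ne_zero ha.ne']
  field_simp
  ring

section Inverse

variable {p : ℝ} {ginv : ℝ → ℝ}
  (hginv : ∀ x ∈ Icc (0 : ℝ) 1, ginv x ∈ Icc (0 : ℝ) (1 / 2) ∧ lsvBranch p (ginv x) = x)
include hginv

lemma ginv_lsvBranch (hp : 0 ≤ p) {y : ℝ} (hy : y ∈ Icc (0 : ℝ) (1 / 2)) :
    ginv (lsvBranch p y) = y :=
  have ⟨hmem, hinv⟩ := hginv _ (mapsTo_lsvBranch hp hy)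
  (strictMonoOn_lsvBranch hp).injOn hmem.1 hy.1 hinv

lemma ginv_pos (hp : 0 ≤ p) {x : ℝ} (hx : x ∈ Ioc (0 : ℝ) 1) : 0 < ginv x := by
  obtain ⟨hmem, hinv⟩ := hginv x (Ioc_subset_Icc_self hx)
  refine hmem.1.lt_of_ne fun h => hx.1.ne ?_
  rw [← hinv, ← h, lsvBranch_zero hp]

lemma ginv_le_self {x : ℝ} (hx : x ∈ Icc (0 : ℝ) 1) : ginv x ≤ x := by
  obtain ⟨hmem, hinv⟩ := hginv x hx
  simpa only [hinv] using self_le_lsvBranch (p := p) hmem.1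

lemma tendsto_ginv_nhdsGT_zero (hp : 0 ≤ p) : Tendsto ginv (𝓝[>] 0) (𝓝[>] 0) := by
  have hmem : ∀ᶠ x in 𝓝[>] (0 : ℝ), x ∈ Ioc (0 : ℝ) 1 := Ioc_mem_nhdsGT one_pos
  refine tendsto_nhdsWithin_of_tendsto_nhds_of_eventually_within _ ?_
    (hmem.mono fun x hx => ginv_pos hginv hp hx)
  refine tendsto_of_tendsto_of_tendsto_of_le_of_le' tendsto_const_nhds
    (tendsto_id.mono_left nhdsWithin_le_nhds) ?_ ?_
  · exact hmem.mono fun x hx => (hginv x (Ioc_subset_Icc_self hx)).1.1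
  · exact hmem.mono fun x hx => ginv_le_self hginv (Ioc_subset_Icc_self hx)

lemma integral_one_div_sub_ginv (hp : 0 < p) {a : ℝ} (ha : 0 < a) (ha' : a ≤ 1 / 2) :
    ∫ x in lsvBranch p a..1, 1 / (x - ginv x) =
      (a ^ (-p) - 2 ^ p) / (p * 2 ^ p) - (p + 1) * log (2 * a) := by
  have hpos : ∀ y ∈ uIcc a (1 / 2), 0 < y := fun y hy => ha.trans_le (uIcc_of_le ha' ▸ hy).1
  -- The change of variables `x = g_p y` needs no regularity of the integrand, hence none of `ginv`.
  have hsubst := intervalIntegral.integral_comp_mul_deriv_of_deriv_nonneg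
    (g := fun x => 1 / (x - ginv x)) (continuous_lsvBranch hp.le).continuousOn
    (fun y _ => hasDerivAt_lsvBranch hp.le y)
    (fun y hy => by have := hpos y (Ioo_subset_Icc_self hy); positivity)
  rw [lsvBranch_half] at hsubst
  have hintegrand : EqOn
      (fun y => ((fun x => 1 / (x - ginv x)) ∘ lsvBranch p) y * (1 + 2 ^ p * ((p + 1) * y ^ p)))
      (fun y => (p + 1) * y⁻¹ + y ^ (-p - 1) / 2 ^ p) (uIcc a (1 / 2)) := by
    intro y hy
    have hy0 := hpos y hy
    have hden : lsvBranch p y - ginv (lsvBranch p y) = 2 ^ p * (y ^ p * y) := by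
      rw [ginv_lsvBranch hginv hp.le ⟨hy0.le, (uIcc_of_le ha' ▸ hy).2⟩, lsvBranch_eq_mul hy0.ne']
      ring
    simp only [Function.comp_apply, hden, rpow_sub_one hy0.ne', rpow_neg hy0.le]
    field_simp
    ring
  rw [← hsubst, intervalIntegral.integral_congr hintegrand, integral_inv_add_rpow_div hp.ne' ha]

lemma lsvBranch_rpow_mul_integral (hp : 0 < p) {a : ℝ} (ha : 0 < a) (ha' : a ≤ 1 / 2) :
    lsvBranch p a ^ p * ∫ x in lsvBranch p a..1, 1 / (x - ginv x) =
      (1 + 2 ^ p * a ^ p) ^ p *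
        ((1 - 2 ^ p * a ^ p) / (p * 2 ^ p) - (p + 1) * (a ^ p * log (2 * a))) := by
  rw [integral_one_div_sub_ginv hginv hp ha ha', lsvBranch_eq_mul ha.ne',
    mul_rpow ha.le (by positivity), rpow_neg ha.le]
  field_simp

end Inverse

lemma tendsto_integral_closedForm_nhdsGT_zero {p : ℝ} (hp : 0 < p) :
    Tendsto (fun a : ℝ => (1 + 2 ^ p * a ^ p) ^ p *
        ((1 - 2 ^ p * a ^ p) / (p * 2 ^ p) - (p + 1) * (a ^ p * log (2 * a))))
      (𝓝[>] 0) (𝓝 (1 / (p * 2 ^ p))) := by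
  have hpow : Tendsto (fun a : ℝ => a ^ p) (𝓝[>] 0) (𝓝 0) :=
    ((continuous_rpow_const hp.le).tendsto' 0 0 (zero_rpow hp.ne')).mono_left nhdsWithin_le_nhds
  have hlog : Tendsto (fun a : ℝ => a ^ p * log (2 * a)) (𝓝[>] 0) (𝓝 0) := by
    have h := (hpow.mul_const (log 2)).add
      ((tendsto_log_mul_rpow_nhdsGT_zero hp).congr fun a => mul_comm _ _)
    rw [zero_mul, add_zero] at h
    refine h.congr' (eventually_mem_nhdsWithin.mono fun a ha => ?_)
    show _ = a ^ p * log (2 * a)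
    rw [log_mul two_ne_zero (ne_of_gt ha), mul_add]
  have hbase := (tendsto_const_nhds (x := (1 : ℝ))).add (hpow.const_mul (2 ^ p))
  have hfactor := ((tendsto_const_nhds (x := (1 : ℝ))).sub (hpow.const_mul (2 ^ p))).div_const
    (p * 2 ^ p) |>.sub (hlog.const_mul (p + 1))
  have h := (hbase.rpow_const (Or.inr hp.le)).mul hfactor
  simpa only [mul_zero, add_zero, sub_zero, one_rpow, one_mul] using h

theorem stmt8 (p : ℝ) (hp : 0 < p) (ginv : ℝ → ℝ)
    (hginv : ∀ x ∈ Icc (0 : ℝ) 1, ginv x ∈ Icc (0 : ℝ) (1 / 2) ∧ lsvBranch p (ginv x) = x) :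
    Tendsto (fun η => η ^ p * ∫ x in η..1, 1 / (x - ginv x))
      (nhdsWithin 0 (Ioi 0)) (nhds (1 / (p * 2 ^ p))) := by
  refine ((tendsto_integral_closedForm_nhdsGT_zero hp).comp
    (tendsto_ginv_nhdsGT_zero hginv hp.le)).congr' ?_
  filter_upwards [Ioc_mem_nhdsGT one_pos] with η hη
  obtain ⟨hmem, hinv⟩ := hginv η (Ioc_subset_Icc_self hη)
  rw [Function.comp_apply, ← lsvBranch_rpow_mul_integral hginv hp (ginv_pos hginv hp.le hη) hmem.2,
    hinv]
end

section
/- Let α ∈ (0,1) and d > 0. Define ψ(s) := e^{−sd} + s·d·∫_0^1 y^{−α} e^{−d·s·y} dy for s ≥ 0. Then lim_{s→0+} s^{−α} (1 − 1/ψ(s)) = 0; consequently the function L(s) := 1 − (s^α/Γ(1+α))·(1/ψ(s)) satisfies L(s) = 1 − s^α/Γ(1+α) + o(s^α) as s → 0+. -/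
open Filter Set MeasureTheory Asymptotics

theorem stmt11 (α : ℝ) (hα : α ∈ Ioo (0 : ℝ) 1) (d : ℝ) (hd : 0 < d)
    (ψ : ℝ → ℝ)
    (hψ : ∀ s, ψ s = Real.exp (-(s * d))
      + s * d * ∫ y in (0 : ℝ)..1, y ^ (-α) * Real.exp (-(d * s * y))) :
    Tendsto (fun s : ℝ => s ^ (-α) * (1 - 1 / ψ s)) (nhdsWithin 0 (Ioi 0)) (nhds 0) ∧
    (fun s : ℝ =>
        (1 - s ^ α / Real.Gamma (1 + α) * (1 / ψ s)) - (1 - s ^ α / Real.Gamma (1 + α)))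
      =o[nhdsWithin 0 (Ioi 0)] fun s : ℝ => s ^ α := by
  obtain ⟨hα0, hα1⟩ := hα
  have h1α : (0:ℝ) < 1 - α := by linarith
  set C : ℝ := d + d / (1 - α) with hC
  have hCpos : 0 < C := by positivity
  -- integrability of y ^ (-α)
  have hrpow : IntervalIntegrable (fun y : ℝ => y ^ (-α)) volume 0 1 :=
    intervalIntegral.intervalIntegrable_rpow' (by linarith)
  -- key bounds for s in Ioo 0 (log 2 / d)
  have hb2 : 0 < Real.log 2 / d := div_pos (Real.log_pos (by norm_num)) hd
  have key : ∀ s ∈ Ioo (0:ℝ) (Real.log 2 / d),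
      ‖s ^ (-α) * (1 - 1 / ψ s)‖ ≤ (2 * C) * s ^ (1 - α) := by
    intro s hs
    obtain ⟨hs0, hsb⟩ := hs
    have hsd : s * d < Real.log 2 := (lt_div_iff₀ hd).mp hsb
    have hsd0 : 0 ≤ s * d := by positivity
    -- integral bounds
    have hint : IntervalIntegrable (fun y : ℝ => y ^ (-α) * Real.exp (-(d * s * y)))
        volume 0 1 := by
      apply hrpow.mul_continuousOn
      exact (Real.continuous_exp.comp (by continuity)).continuousOn
    set I : ℝ := ∫ y in (0:ℝ)..1, y ^ (-α) * Real.exp (-(d * s * y)) with hI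
    have hI0 : 0 ≤ I := by
      apply intervalIntegral.integral_nonneg (by norm_num)
      intro u hu
      exact mul_nonneg (Real.rpow_nonneg hu.1 _) (Real.exp_nonneg _)
    have hIle : I ≤ 1 / (1 - α) := by
      have hmono : I ≤ ∫ y in (0:ℝ)..1, y ^ (-α) := by
        apply intervalIntegral.integral_mono_on (by norm_num) hint hrpow
        intro u hu
        have : Real.exp (-(d * s * u)) ≤ 1 := by
          rw [Real.exp_le_one_iff]
          have h0 : 0 ≤ d * s * u := mul_nonneg (mul_nonneg hd.le hs0.le) hu.1
          linarith
        calc u ^ (-α) * Real.exp (-(d * s * u)) ≤ u ^ (-α) * 1 :=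
              mul_le_mul_of_nonneg_left this (Real.rpow_nonneg hu.1 _)
          _ = u ^ (-α) := mul_one _
      have hval : (∫ y in (0:ℝ)..1, y ^ (-α)) = 1 / (1 - α) := by
        rw [integral_rpow (Or.inl (by linarith))]
        rw [Real.one_rpow, Real.zero_rpow (by linarith)]
        ring_nf
      linarith [hmono, hval.le, hval.ge]
    -- ψ s ≥ 1/2
    have hexp_lb : (1:ℝ)/2 < Real.exp (-(s * d)) := by
      have : Real.exp (Real.log (1/2)) < Real.exp (-(s * d)) := by
        apply Real.exp_lt_exp.mpr
        rw [Real.log_div one_ne_zero (by norm_num), Real.log_one]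
        linarith
      rwa [Real.exp_log (by norm_num)] at this
    have hψlb : (1:ℝ)/2 ≤ ψ s := by
      rw [hψ s, ← hI]
      have : 0 ≤ s * d * I := by positivity
      linarith
    have hψpos : 0 < ψ s := lt_of_lt_of_le (by norm_num) hψlb
    -- |ψ s - 1| ≤ C * s
    have hψ_near : |ψ s - 1| ≤ C * s := by
      rw [hψ s, ← hI]
      have h1 : |Real.exp (-(s * d)) - 1| ≤ s * d := by
        have hexp1 : Real.exp (-(s * d)) ≤ 1 := Real.exp_le_one_iff.mpr (by linarith)
        have hexp2 : 1 - s * d ≤ Real.exp (-(s * d)) := by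
          linarith [Real.add_one_le_exp (-(s * d))]
        rw [abs_sub_comm, abs_of_nonneg (by linarith)]
        linarith
      have h2 : |s * d * I| ≤ s * d * (1 / (1 - α)) := by
        rw [abs_of_nonneg (by positivity)]
        exact mul_le_mul_of_nonneg_left hIle (by positivity)
      calc |Real.exp (-(s * d)) + s * d * I - 1|
          = |(Real.exp (-(s * d)) - 1) + s * d * I| := by congr 1; ring
        _ ≤ |Real.exp (-(s * d)) - 1| + |s * d * I| := abs_add_le _ _
        _ ≤ s * d + s * d * (1 / (1 - α)) := add_le_add h1 h2
        _ = C * s := by rw [hC]; ring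
    -- |1 - 1/ψ s| ≤ 2 * (C * s)
    have hdiff : |1 - 1 / ψ s| ≤ 2 * (C * s) := by
      have : 1 - 1 / ψ s = (ψ s - 1) / ψ s := by field_simp
      rw [this, abs_div, abs_of_pos hψpos, div_le_iff₀ hψpos]
      calc |ψ s - 1| ≤ C * s := hψ_near
        _ = 2 * (C * s) * (1/2) := by ring
        _ ≤ 2 * (C * s) * ψ s := by
            apply mul_le_mul_of_nonneg_left hψlb (by positivity)
    -- conclude
    have hsrpow : (0:ℝ) ≤ s ^ (-α) := Real.rpow_nonneg hs0.le _
    rw [norm_mul, Real.norm_eq_abs, Real.norm_eq_abs, abs_of_nonneg hsrpow]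
    have hspow : s ^ (-α) * s = s ^ (1 - α) := by
      rw [show (1 - α) = -α + 1 by ring, Real.rpow_add hs0, Real.rpow_one]
    calc s ^ (-α) * |1 - 1 / ψ s| ≤ s ^ (-α) * (2 * (C * s)) :=
          mul_le_mul_of_nonneg_left hdiff hsrpow
      _ = (2 * C) * (s ^ (-α) * s) := by ring
      _ = (2 * C) * s ^ (1 - α) := by rw [hspow]
  -- bound tends to zero
  have hbnd0 : Tendsto (fun s : ℝ => (2 * C) * s ^ (1 - α)) (nhdsWithin 0 (Ioi 0)) (nhds 0) := by
    have h : Tendsto (fun s : ℝ => s ^ (1 - α)) (nhds 0) (nhds ((0:ℝ) ^ (1 - α))) :=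
      (Real.continuousAt_rpow_const 0 (1 - α) (Or.inr h1α.le)).tendsto
    rw [Real.zero_rpow (by linarith)] at h
    have h2 := h.const_mul (2 * C)
    rw [mul_zero] at h2
    exact h2.mono_left (nhdsWithin_le_nhds :
      nhdsWithin (0:ℝ) (Ioi 0) ≤ nhds 0)
  have part1 : Tendsto (fun s : ℝ => s ^ (-α) * (1 - 1 / ψ s))
      (nhdsWithin 0 (Ioi 0)) (nhds 0) := by
    apply squeeze_zero_norm' _ hbnd0
    filter_upwards [Ioo_mem_nhdsGT_of_mem (by constructor <;> [rfl; exact hb2] :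
      (0:ℝ) ∈ Ico 0 (Real.log 2 / d))] with s hs
    exact key s hs
  refine ⟨part1, ?_⟩
  -- part 2
  have hpowα : Tendsto (fun s : ℝ => s ^ α) (nhdsWithin 0 (Ioi 0)) (nhds 0) := by
    have h : Tendsto (fun s : ℝ => s ^ α) (nhds 0) (nhds ((0:ℝ) ^ α)) :=
      (Real.continuousAt_rpow_const 0 α (Or.inr hα0.le)).tendsto
    rw [Real.zero_rpow (ne_of_gt hα0)] at h
    exact h.mono_left nhdsWithin_le_nhds
  have htend : Tendsto (fun s : ℝ => 1 - 1 / ψ s) (nhdsWithin 0 (Ioi 0)) (nhds 0) := by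
    have hmul := hpowα.mul part1
    rw [mul_zero] at hmul
    apply hmul.congr'
    filter_upwards [self_mem_nhdsWithin] with s (hs : s ∈ Ioi 0)
    rw [← mul_assoc, ← Real.rpow_add hs, add_neg_cancel, Real.rpow_zero, one_mul]
  have hg : Tendsto (fun s : ℝ => (1 - 1 / ψ s) / Real.Gamma (1 + α))
      (nhdsWithin 0 (Ioi 0)) (nhds 0) := by
    have := htend.div_const (Real.Gamma (1 + α))
    simpa using this
  have hlo : (fun s : ℝ => (1 - 1 / ψ s) / Real.Gamma (1 + α))
      =o[nhdsWithin 0 (Ioi 0)] (fun _ : ℝ => (1:ℝ)) := isLittleO_one_iff ℝ |>.mpr hg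
  have hbo : (fun s : ℝ => s ^ α) =O[nhdsWithin 0 (Ioi 0)] (fun s : ℝ => s ^ α) :=
    isBigO_refl _ _
  have := hbo.mul_isLittleO hlo
  simp only [mul_one] at this
  apply this.congr' _ (EventuallyEq.refl _ _)
  have hΓ : Real.Gamma (1 + α) ≠ 0 :=
    (Real.Gamma_pos_of_pos (by linarith : (0:ℝ) < 1 + α)).ne'
  filter_upwards with s
  ring
end
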